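/- For every nonempty compact set of possible allocations Γ ⊆ ℝ_+^k and every random valuation X with values in ℝ_+^k that has finite expectation, there exists a monotonic IC and IR Γ-mechanism μ = (q,s) attaining the optimal monotonic revenue, i.e., E[s(X)] = MonRev_Γ(X) := sup over all monotonic IC and IR Γ-mechanisms μ' = (q',s') of E[s'(X)]. -/

import Mathlib

open MeasureTheory Filter

noncomputable section

abbrev E (k : ℕ) := EuclideanSpace ℝ (Fin k)

def orthant (k : ℕ) : Set (E k) := {x | ∀ i, 0 ≤ x i}

/-- The dot product `g · x` on `ℝ^k`. -/
def dotp {k : ℕ} (g x : E k) : ℝ := ∑ i, g i * x i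

def IsAlloc {k : ℕ} (Γ : Set (E k)) (q : E k → E k) : Prop :=
  ∀ x ∈ orthant k, q x ∈ Γ

def IsIC {k : ℕ} (q : E k → E k) (s : E k → ℝ) : Prop :=
  ∀ x ∈ orthant k, ∀ y ∈ orthant k, dotp (q x) x - s x ≥ dotp (q y) x - s y

def IsIR {k : ℕ} (q : E k → E k) (s : E k → ℝ) : Prop :=
  ∀ x ∈ orthant k, 0 ≤ dotp (q x) x - s x

def IsNPT {k : ℕ} (s : E k → ℝ) : Prop :=
  ∀ x ∈ orthant k, 0 ≤ s x

/-- The set of subgradients of `f` at `x`. -/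
def Subgrad {k : ℕ} (f : E k → ℝ) (x : E k) : Set (E k) :=
  {g | ∀ y, f y - f x ≥ dotp g (y - x)}

/-- `b ∈ B_Γ`: convex on `ℝ^k`, `b 0 = 0`, and a subgradient in `Γ` at every point. -/
def BClass {k : ℕ} (Γ : Set (E k)) (b : E k → ℝ) : Prop :=
  ConvexOn ℝ Set.univ b ∧ b 0 = 0 ∧ ∀ x, (Subgrad b x ∩ Γ).Nonempty

/-- One-sided directional derivative `f′(x;y) = lim_{δ→0⁺} (f(x+δy)-f(x))/δ`. -/
def dirDeriv {k : ℕ} (b : E k → ℝ) (x y : E k) : ℝ :=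
  limUnder (nhdsWithin (0:ℝ) (Set.Ioi 0)) fun δ => (b (x + δ • y) - b x) / δ

/-- The extended buyer payoff function `b(x) = sup_{z ∈ ℝ₊^k} [q(z)·x − s(z)]`. -/
def extPayoff {k : ℕ} (q : E k → E k) (s : E k → ℝ) (x : E k) : ℝ :=
  sSup ((fun z => dotp (q z) x - s z) '' orthant k)

def SellerFavorable {k : ℕ} (q : E k → E k) (s : E k → ℝ) : Prop :=
  ∀ x ∈ orthant k, s x = dirDeriv (extPayoff q s) x x - extPayoff q s x

/-- A monotonic mechanism: payments nondecreasing in the (coordinatewise) valuation. -/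
def MonotonicPay {k : ℕ} (s : E k → ℝ) : Prop :=
  ∀ x ∈ orthant k, ∀ y ∈ orthant k, (∀ i, x i ≤ y i) → s x ≤ s y


/-!
Take mechanisms whose revenues approach the supremum, normalised to `s 0 = 0`. By IC their
truthful utilities `q(x)·x − s(x)` are uniformly Lipschitz on the orthant, with constant a bound
`C` on `Γ`, and lie in `[0, C‖x‖]`, so a diagonal argument yields a subsequence along which they
converge pointwise to some `b`. Put `s* := limsup sₙ` along it, a monotone payment. At each `x`,
pass to a further subsequence realising `s* x` on which `qₙ x → g ∈ Γ`: the limit item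
`(g, s* x)` yields utility `b x` at `x` and at most `b y` at every `y`, so these items form an IC
and IR mechanism. As `0 ≤ sₙ ≤ C‖x‖`, the reverse Fatou lemma bounds its revenue below by the
supremum. Since `s*` need not be measurable, Fatou is applied to the integrable `sₙ ∘ X`.
-/

open Topology ENNReal

section Equicontinuity

variable {X α : Type*} [TopologicalSpace X] [PseudoMetricSpace α]

theorem EquicontinuousAt.cauchySeq_of_mem_closure {F : ℕ → X → α} {S : Set X} {x : X}
    (hF : EquicontinuousAt F x) (hx : x ∈ closure S) (hS : ∀ y ∈ S, CauchySeq (F · y)) :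
    CauchySeq (F · x) := by
  refine Metric.cauchySeq_iff.mpr fun ε hε => ?_
  obtain ⟨y, hxy, hyS⟩ := ((Metric.equicontinuousAt_iff_right.mp hF (ε / 3) (by positivity))
    |>.and_frequently (mem_closure_iff_frequently.mp hx)).exists
  obtain ⟨N, hN⟩ := Metric.cauchySeq_iff.mp (hS y hyS) (ε / 3) (by positivity)
  refine ⟨N, fun m hm n hn => (dist_triangle4 _ (F m y) (F n y) _).trans_lt ?_⟩
  have := hxy n
  rw [dist_comm] at this
  linarith [hxy m, hN m hm n hn]

theorem Equicontinuous.exists_subseq_tendsto [TopologicalSpace.SeparableSpace X] {F : ℕ → X → α}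
    (hF : Equicontinuous F) (hK : ∀ x, ∃ K, IsCompact K ∧ ∀ n, F n x ∈ K) :
    ∃ φ : ℕ → ℕ, StrictMono φ ∧ ∃ f : X → α, ∀ x, Tendsto (fun n => F (φ n) x) atTop (𝓝 (f x)) := by
  rcases isEmpty_or_nonempty X with hX | hX
  · exact ⟨id, strictMono_id, isEmptyElim, isEmptyElim⟩
  obtain ⟨u, hu⟩ := TopologicalSpace.exists_dense_seq X
  choose K hK hFK using hK
  obtain ⟨_, -, φ, hφ, hφu⟩ := (isCompact_univ_pi fun d => hK (u d)).tendsto_subseq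
    (x := fun n d => F n (u d)) fun n => Set.mem_univ_pi.mpr fun d => hFK (u d) n
  have hcauchy (x : X) : CauchySeq fun n => F (φ n) x := by
    refine (hF.comp φ x).cauchySeq_of_mem_closure (hu.closure_range ▸ Set.mem_univ x) ?_
    rintro _ ⟨d, rfl⟩
    exact (tendsto_pi_nhds.mp hφu d).cauchySeq
  choose f hf using fun x => (cauchySeq_tendsto_of_isComplete (hK x).isComplete
    (fun n => hFK x (φ n)) (hcauchy x)).imp fun _ => And.right
  exact ⟨φ, hφ, f, hf⟩

end Equicontinuity

section ReverseFatou

variable {Ω : Type*} [MeasurableSpace Ω] {μ : Measure Ω}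

theorem limsup_lintegral_le' {f : ℕ → Ω → ℝ≥0∞} (g : Ω → ℝ≥0∞) (hf : ∀ n, AEMeasurable (f n) μ)
    (h_bound : ∀ n, f n ≤ᵐ[μ] g) (h_fin : ∫⁻ a, g a ∂μ ≠ ∞) :
    limsup (fun n => ∫⁻ a, f n a ∂μ) atTop ≤ ∫⁻ a, limsup (fun n => f n a) atTop ∂μ := by
  have hmk : ∀ᵐ a ∂μ, ∀ n, f n a = (hf n).mk _ a := ae_all_iff.mpr fun n => (hf n).ae_eq_mk
  calc limsup (fun n => ∫⁻ a, f n a ∂μ) atTop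
      = limsup (fun n => ∫⁻ a, (hf n).mk _ a ∂μ) atTop := by
        simp_rw [lintegral_congr_ae (hf _).ae_eq_mk]
    _ ≤ ∫⁻ a, limsup (fun n => (hf n).mk _ a) atTop ∂μ :=
        limsup_lintegral_le g (fun n => (hf n).measurable_mk)
          (fun n => (hf n).ae_eq_mk.symm.trans_le (h_bound n)) h_fin
    _ = ∫⁻ a, limsup (fun n => f n a) atTop ∂μ :=
        lintegral_congr_ae (hmk.mono fun a ha => by simp_rw [ha])

theorem le_integral_limsup_of_tendsto {f : ℕ → Ω → ℝ} {g : Ω → ℝ} {r : ℝ}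
    (hf : ∀ n, AEMeasurable (f n) μ) (hg : Integrable g μ) (hf0 : ∀ n a, 0 ≤ f n a)
    (hfg : ∀ n a, f n a ≤ g a) (hr : Tendsto (fun n => ∫ a, f n a ∂μ) atTop (𝓝 r)) :
    r ≤ ∫ a, limsup (fun n => f n a) atTop ∂μ := by
  have hbdd (a : Ω) : IsBoundedUnder (· ≤ ·) atTop fun n => f n a :=
    isBoundedUnder_of ⟨g a, (hfg · a)⟩
  have hcobdd (a : Ω) : IsCoboundedUnder (· ≤ ·) atTop fun n => f n a :=
    (isBoundedUnder_of ⟨0, (hf0 · a)⟩).isCoboundedUnder_le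
  have hint (n : ℕ) : Integrable (f n) μ :=
    hg.mono' (hf n).aestronglyMeasurable
      (ae_of_all _ fun a => (Real.norm_of_nonneg (hf0 n a)).trans_le (hfg n a))
  have hmeas : AEMeasurable (fun a => limsup (fun n => f n a) atTop) μ := by
    refine ⟨fun a => limsup (fun n => (hf n).mk _ a) atTop,
      .limsup fun n => (hf n).measurable_mk, ?_⟩
    filter_upwards [ae_all_iff.mpr fun n => (hf n).ae_eq_mk] with a ha
    simp_rw [ha]
  have hlim0 (a : Ω) : 0 ≤ limsup (fun n => f n a) atTop :=
    le_limsup_of_frequently_le (.of_forall (hf0 · a)) (hbdd a)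
  have hlim_int : Integrable (fun a => limsup (fun n => f n a) atTop) μ :=
    hg.mono' hmeas.aestronglyMeasurable (ae_of_all _ fun a =>
      (Real.norm_of_nonneg (hlim0 a)).trans_le (limsup_le_of_le (hcobdd a) (.of_forall (hfg · a))))
  have hofReal (a : Ω) : limsup (fun n => ENNReal.ofReal (f n a)) atTop =
      ENNReal.ofReal (limsup (fun n => f n a) atTop) :=
    (ENNReal.ofReal_mono.map_limsup_of_continuousAt _ ENNReal.continuous_ofReal.continuousAt
      (hbdd a) (hcobdd a)).symm
  rw [← ENNReal.ofReal_le_ofReal_iff (integral_nonneg hlim0),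
    ofReal_integral_eq_lintegral_ofReal hlim_int (ae_of_all _ hlim0)]
  calc ENNReal.ofReal r = limsup (fun n => ∫⁻ a, ENNReal.ofReal (f n a) ∂μ) atTop := by
        rw [← (ENNReal.tendsto_ofReal hr).limsup_eq]
        congr 1 with n
        exact ofReal_integral_eq_lintegral_ofReal (hint n) (ae_of_all _ (hf0 n))
    _ ≤ ∫⁻ a, limsup (fun n => ENNReal.ofReal (f n a)) atTop ∂μ :=
        limsup_lintegral_le' _ (fun n => (hf n).ennreal_ofReal)
          (fun n => ae_of_all _ fun a => ENNReal.ofReal_le_ofReal (hfg n a))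
          hg.lintegral_lt_top.ne
    _ = ∫⁻ a, ENNReal.ofReal (limsup (fun n => f n a) atTop) ∂μ := by simp_rw [hofReal]

end ReverseFatou

section Mechanisms

variable {k : ℕ}

theorem zero_mem_orthant : (0 : E k) ∈ orthant k := fun _ => le_rfl

theorem dotp_eq_inner (g x : E k) : dotp g x = inner ℝ g x := by
  simp [dotp, PiLp.inner_apply, mul_comm]

theorem dotp_le_mul_norm {g : E k} {C : ℝ} (hg : ‖g‖ ≤ C) (x : E k) : dotp g x ≤ C * ‖x‖ := by
  rw [dotp_eq_inner]
  exact (real_inner_le_norm g x).trans (mul_le_mul_of_nonneg_right hg (norm_nonneg x))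

theorem dotp_nonneg {g x : E k} (hg : g ∈ orthant k) (hx : x ∈ orthant k) : 0 ≤ dotp g x :=
  Finset.sum_nonneg fun i _ => mul_nonneg (hg i) (hx i)

theorem dotp_sub_right (g x y : E k) : dotp g (x - y) = dotp g x - dotp g y := by
  simp [dotp, mul_sub, Finset.sum_sub_distrib]

theorem Filter.Tendsto.dotp {ι : Type*} {l : Filter ι} {g : ι → E k} {g₀ : E k}
    (h : Tendsto g l (𝓝 g₀)) (x : E k) : Tendsto (fun i => dotp (g i) x) l (𝓝 (dotp g₀ x)) := by
  simpa only [dotp_eq_inner] using h.inner tendsto_const_nhds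

def utility (q : E k → E k) (s : E k → ℝ) (x : E k) : ℝ := dotp (q x) x - s x

structure IsMonotonicMechanism (Γ : Set (E k)) (q : E k → E k) (s : E k → ℝ) : Prop where
  alloc : IsAlloc Γ q
  ic : IsIC q s
  ir : IsIR q s
  mono : MonotonicPay s

variable {Γ : Set (E k)} {q : E k → E k} {s : E k → ℝ} {C : ℝ}

theorem isMonotonicMechanism_const {g : E k} (hgΓ : g ∈ Γ) (hg : g ∈ orthant k) :
    IsMonotonicMechanism Γ (fun _ => g) (fun _ => 0) where
  alloc _ _ := hgΓ
  ic _ _ _ _ := le_rfl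
  ir _ hx := by simpa using dotp_nonneg hg hx
  mono _ _ _ _ _ := le_rfl

theorem IsIC.lipschitzWith_utility (hq : IsAlloc Γ q) (hC : ∀ g ∈ Γ, ‖g‖ ≤ C) (h : IsIC q s) :
    LipschitzWith C.toNNReal fun x : orthant k => utility q s x := by
  refine LipschitzWith.of_le_add_mul' C fun x y => ?_
  have hIC := h y y.2 x x.2
  have hle := dotp_le_mul_norm (hC _ (hq x x.2)) (x - y)
  rw [dotp_sub_right] at hle
  rw [Subtype.dist_eq, dist_eq_norm]
  simp only [utility] at hIC ⊢
  linarith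

theorem IsIR.payment_zero_nonpos (h : IsIR q s) : s 0 ≤ 0 := by
  simpa [dotp] using h 0 zero_mem_orthant

namespace IsMonotonicMechanism

theorem sub_payment_zero (h : IsMonotonicMechanism Γ q s) (hΓ : Γ ⊆ orthant k) :
    IsMonotonicMechanism Γ q fun x => s x - s 0 where
  alloc := h.alloc
  ic x hx y hy := by linarith [h.ic x hx y hy]
  ir x hx := by
    linarith [h.ic x hx 0 zero_mem_orthant, dotp_nonneg (hΓ (h.alloc 0 zero_mem_orthant)) hx]
  mono x hx y hy hxy := by linarith [h.mono x hx y hy hxy]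

theorem payment_nonneg (h : IsMonotonicMechanism Γ q s) (h0 : s 0 = 0) {x : E k}
    (hx : x ∈ orthant k) : 0 ≤ s x :=
  h0 ▸ h.mono 0 zero_mem_orthant x hx hx

theorem utility_le (h : IsMonotonicMechanism Γ q s) (h0 : s 0 = 0) (hC : ∀ g ∈ Γ, ‖g‖ ≤ C)
    {x : E k} (hx : x ∈ orthant k) : utility q s x ≤ C * ‖x‖ := by
  linarith [dotp_le_mul_norm (hC _ (h.alloc x hx)) x, h.payment_nonneg h0 hx,
    show utility q s x = dotp (q x) x - s x from rfl]

end IsMonotonicMechanism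

theorem IsIR.payment_le (hq : IsAlloc Γ q) (hC : ∀ g ∈ Γ, ‖g‖ ≤ C) (h : IsIR q s) {x : E k}
    (hx : x ∈ orthant k) : s x ≤ C * ‖x‖ := by
  linarith [dotp_le_mul_norm (hC _ (hq x hx)) x, h x hx]

end Mechanisms

section Revenue

variable {k : ℕ} {Γ : Set (E k)} {Ω : Type*} [MeasurableSpace Ω] {P : Measure Ω} {X : Ω → E k}

def monotonicRevenues (Γ : Set (E k)) (P : Measure Ω) (X : Ω → E k) : Set ℝ :=
  {r : ℝ | ∃ q' : E k → E k, ∃ s' : E k → ℝ,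
    IsAlloc Γ q' ∧ IsIC q' s' ∧ IsIR q' s' ∧ MonotonicPay s' ∧ r = ∫ ω, s' (X ω) ∂P}

theorem IsMonotonicMechanism.integral_mem_monotonicRevenues {q : E k → E k} {s : E k → ℝ}
    (h : IsMonotonicMechanism Γ q s) : ∫ ω, s (X ω) ∂P ∈ monotonicRevenues Γ P X :=
  ⟨q, s, h.alloc, h.ic, h.ir, h.mono, rfl⟩

theorem bddAbove_monotonicRevenues {C : ℝ} (hC : ∀ g ∈ Γ, ‖g‖ ≤ C) (hC0 : 0 ≤ C)
    (hXpos : ∀ ω, X ω ∈ orthant k) (hXint : Integrable (fun ω => ‖X ω‖) P) :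
    BddAbove (monotonicRevenues Γ P X) := by
  refine ⟨∫ ω, C * ‖X ω‖ ∂P, ?_⟩
  rintro _ ⟨q, s, hq, -, hIR, -, rfl⟩
  by_cases hint : Integrable (fun ω => s (X ω)) P
  · exact integral_mono hint (hXint.const_mul C) fun ω => hIR.payment_le hq hC (hXpos ω)
  · rw [integral_undef hint]
    exact integral_nonneg fun ω => mul_nonneg hC0 (norm_nonneg _)

variable [IsFiniteMeasure P]

/-- Subtracting `s 0 ≤ 0` from the payments preserves IC, IR and monotonicity and can only raise
the revenue; a non-integrable `s ∘ X` has junk revenue `0`, which a constant mechanism matches. -/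
theorem exists_normalized_le_integral (hΓ : Γ ⊆ orthant k) {r : ℝ}
    (hr : r ∈ monotonicRevenues Γ P X) :
    ∃ q : E k → E k, ∃ s : E k → ℝ, IsMonotonicMechanism Γ q s ∧ s 0 = 0 ∧
      Integrable (fun ω => s (X ω)) P ∧ r ≤ ∫ ω, s (X ω) ∂P := by
  obtain ⟨q, s, hq, hIC, hIR, hM, rfl⟩ := hr
  by_cases hint : Integrable (fun ω => s (X ω)) P
  · refine ⟨q, fun x => s x - s 0, (IsMonotonicMechanism.mk hq hIC hIR hM).sub_payment_zero hΓ,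
      sub_self _, hint.sub (integrable_const _), ?_⟩
    rw [integral_sub hint (integrable_const _), integral_const, smul_eq_mul]
    nlinarith [hIR.payment_zero_nonpos, measureReal_nonneg (μ := P) (s := Set.univ)]
  · have hq0 := hq 0 zero_mem_orthant
    refine ⟨fun _ => q 0, fun _ => 0, isMonotonicMechanism_const hq0 (hΓ hq0), rfl,
      integrable_const _, ?_⟩
    simp [integral_undef hint]

theorem exists_seq_normalized_tendsto_sSup (hΓne : Γ.Nonempty) (hΓ : Γ ⊆ orthant k)
    (hbdd : BddAbove (monotonicRevenues Γ P X)) :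
    ∃ (q : ℕ → E k → E k) (s : ℕ → E k → ℝ),
      (∀ n, IsMonotonicMechanism Γ (q n) (s n)) ∧ (∀ n, s n 0 = 0) ∧
      (∀ n, Integrable (fun ω => s n (X ω)) P) ∧
      Tendsto (fun n => ∫ ω, s n (X ω) ∂P) atTop (𝓝 (sSup (monotonicRevenues Γ P X))) := by
  obtain ⟨γ, hγ⟩ := hΓne
  obtain ⟨r, -, hr, hrS⟩ := exists_seq_tendsto_sSup
    ⟨_, (isMonotonicMechanism_const hγ (hΓ hγ)).integral_mem_monotonicRevenues⟩ hbdd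
  choose q s hqs h0 hint hle using fun n => exists_normalized_le_integral hΓ (hrS n)
  exact ⟨q, s, hqs, h0, hint, tendsto_of_tendsto_of_tendsto_of_le_of_le hr
    tendsto_const_nhds hle fun n => le_csSup hbdd (hqs n).integral_mem_monotonicRevenues⟩

end Revenue

section Limit

variable {k : ℕ} {Γ : Set (E k)} {C : ℝ} {q : ℕ → E k → E k} {s : ℕ → E k → ℝ}

theorem exists_limit_menu_item (hΓc : IsCompact Γ) (hC : ∀ g ∈ Γ, ‖g‖ ≤ C)
    (hqs : ∀ n, IsMonotonicMechanism Γ (q n) (s n)) (h0 : ∀ n, s n 0 = 0) {b : E k → ℝ}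
    (hb : ∀ y ∈ orthant k, Tendsto (fun n => utility (q n) (s n) y) atTop (𝓝 (b y)))
    {x : E k} (hx : x ∈ orthant k) :
    ∃ g ∈ Γ, dotp g x - limsup (fun n => s n x) atTop = b x ∧
      ∀ y ∈ orthant k, dotp g y - limsup (fun n => s n x) atTop ≤ b y := by
  obtain ⟨ψ, hψs, hψ⟩ := exists_seq_tendsto_limsup (f := atTop) (u := fun n => s n x)
    (isBoundedUnder_of ⟨0, fun n => (hqs n).payment_nonneg (h0 n) hx⟩).isCoboundedUnder_le
    (isBoundedUnder_of ⟨C * ‖x‖, fun n => (hqs n).ir.payment_le (hqs n).alloc hC hx⟩)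
  obtain ⟨g, hg, ψ', hψ', hqg⟩ := hΓc.tendsto_subseq fun n => (hqs (ψ n)).alloc x hx
  have hρ : Tendsto (ψ ∘ ψ') atTop atTop := hψ.comp hψ'.tendsto_atTop
  have hitem (y : E k) : Tendsto (fun n => dotp (q (ψ (ψ' n)) x) y - s (ψ (ψ' n)) x) atTop
      (𝓝 (dotp g y - limsup (fun n => s n x) atTop)) :=
    (hqg.dotp y).sub (hψs.comp hψ'.tendsto_atTop)
  exact ⟨g, hg, tendsto_nhds_unique (hitem x) ((hb x hx).comp hρ),
    fun y hy => le_of_tendsto_of_tendsto' (hitem y) ((hb y hy).comp hρ)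
      fun n => (hqs _).ic y hy x hx⟩

theorem exists_isMonotonicMechanism_limsup (hΓc : IsCompact Γ)
    (hqs : ∀ n, IsMonotonicMechanism Γ (q n) (s n)) (h0 : ∀ n, s n 0 = 0) :
    ∃ φ : ℕ → ℕ, StrictMono φ ∧ ∃ q' : E k → E k,
      IsMonotonicMechanism Γ q' fun x => limsup (fun n => s (φ n) x) atTop := by
  obtain ⟨C, hC⟩ := hΓc.isBounded.exists_norm_le
  obtain ⟨φ, hφ, f, hf⟩ := (LipschitzWith.uniformEquicontinuous _ C.toNNReal fun n =>
      (hqs n).ic.lipschitzWith_utility (hqs n).alloc hC).equicontinuous.exists_subseq_tendsto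
    fun x => ⟨Set.Icc 0 (C * ‖(x : E k)‖), isCompact_Icc,
      fun n => ⟨(hqs n).ir x x.2, (hqs n).utility_le (h0 n) hC x.2⟩⟩
  choose! b hb using fun y (hy : y ∈ orthant k) => (⟨f ⟨y, hy⟩, hf ⟨y, hy⟩⟩ :
    ∃ B, Tendsto (fun n => utility (q (φ n)) (s (φ n)) y) atTop (𝓝 B))
  have hitem (x : E k) : ∃ g ∈ Γ, x ∈ orthant k →
      dotp g x - limsup (fun n => s (φ n) x) atTop = b x ∧
      ∀ y ∈ orthant k, dotp g y - limsup (fun n => s (φ n) x) atTop ≤ b y := by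
    by_cases hx : x ∈ orthant k
    · obtain ⟨g, hg, hgx⟩ :=
        exists_limit_menu_item hΓc hC (fun n => hqs (φ n)) (fun n => h0 (φ n)) hb hx
      exact ⟨g, hg, fun _ => hgx⟩
    · exact ⟨q 0 0, (hqs 0).alloc 0 zero_mem_orthant, fun h => absurd h hx⟩
  choose q' hq'Γ hq' using hitem
  refine ⟨φ, hφ, q', fun x _ => hq'Γ x, fun x hx y hy => ?_, fun x hx => ?_,
    fun x hx y hy hxy => ?_⟩
  · linarith [(hq' x hx).1, (hq' y hy).2 x hx]
  · rw [(hq' x hx).1]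
    exact ge_of_tendsto' (hb x hx) fun n => (hqs (φ n)).ir x hx
  · exact limsup_le_limsup (.of_forall fun n => (hqs (φ n)).mono x hx y hy hxy)
      (isBoundedUnder_of ⟨0, fun n => (hqs (φ n)).payment_nonneg (h0 (φ n)) hx⟩).isCoboundedUnder_le
      (isBoundedUnder_of ⟨C * ‖y‖, fun n => (hqs (φ n)).ir.payment_le (hqs (φ n)).alloc hC hy⟩)

end Limit

theorem stmt8_general {k : ℕ} (Γ : Set (E k)) (hΓne : Γ.Nonempty)
    (hΓc : IsCompact Γ) (hΓ : Γ ⊆ orthant k)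
    {Ω : Type*} [MeasurableSpace Ω] (P : Measure Ω) [IsProbabilityMeasure P]
    (X : Ω → E k) (hXpos : ∀ ω, X ω ∈ orthant k)
    (hXint : Integrable (fun ω => ‖X ω‖) P) :
    ∃ q : E k → E k, ∃ s : E k → ℝ,
      IsAlloc Γ q ∧ IsIC q s ∧ IsIR q s ∧ MonotonicPay s ∧
      (∫ ω, s (X ω) ∂P) =
        sSup {r : ℝ | ∃ q' : E k → E k, ∃ s' : E k → ℝ,
          IsAlloc Γ q' ∧ IsIC q' s' ∧ IsIR q' s' ∧ MonotonicPay s' ∧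
          r = ∫ ω, s' (X ω) ∂P} := by
  obtain ⟨C, hC0, hC⟩ := hΓc.isBounded.exists_pos_norm_le
  have hbdd := bddAbove_monotonicRevenues hC hC0.le hXpos hXint
  obtain ⟨q, s, hqs, h0, hint, hR⟩ := exists_seq_normalized_tendsto_sSup hΓne hΓ hbdd
  obtain ⟨φ, hφ, q', hq'⟩ := exists_isMonotonicMechanism_limsup hΓc hqs h0
  refine ⟨q', _, hq'.alloc, hq'.ic, hq'.ir, hq'.mono,
    le_antisymm (le_csSup hbdd hq'.integral_mem_monotonicRevenues) ?_⟩
  exact le_integral_limsup_of_tendsto (fun n => (hint (φ n)).aemeasurable) (hXint.const_mul C)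
    (fun n ω => (hqs (φ n)).payment_nonneg (h0 (φ n)) (hXpos ω))
    (fun n ω => (hqs (φ n)).ir.payment_le (hqs (φ n)).alloc hC (hXpos ω))
    (hR.comp hφ.tendsto_atTop)

/-- existence of a revenue-maximizing monotonic IC and IR mechanism. -/
theorem stmt8 {k : ℕ} (hk : 1 ≤ k) (Γ : Set (E k)) (hΓne : Γ.Nonempty)
    (hΓc : IsCompact Γ) (hΓ : Γ ⊆ orthant k)
    {Ω : Type*} [MeasurableSpace Ω] (P : Measure Ω) [IsProbabilityMeasure P]
    (X : Ω → E k) (hXm : Measurable X) (hXpos : ∀ ω, X ω ∈ orthant k)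
    (hXint : Integrable (fun ω => ‖X ω‖) P) :
    ∃ q : E k → E k, ∃ s : E k → ℝ,
      IsAlloc Γ q ∧ IsIC q s ∧ IsIR q s ∧ MonotonicPay s ∧
      (∫ ω, s (X ω) ∂P) =
        sSup {r : ℝ | ∃ q' : E k → E k, ∃ s' : E k → ℝ,
          IsAlloc Γ q' ∧ IsIC q' s' ∧ IsIR q' s' ∧ MonotonicPay s' ∧
          r = ∫ ω, s' (X ω) ∂P} :=
  stmt8_general Γ hΓne hΓc hΓ P X hXpos hXint
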